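/- For fixed ε > 0, B > 0 and η ∈ 𝓟(ℝ), the function x ↦ KLinf(η, x) is continuous on the open interval (−B^{1/(1+ε)}, B^{1/(1+ε)}). -/

import Mathlib

open MeasureTheory
open scoped ENNReal Classical

/-! Let `c = B^{1/(1+ε)}`, so that `|c|^{1+ε} = B`. For `y ≤ x < c` and `κ` feasible at
level `y`, the mixture `κ' = a κ + (1 - a) δ_c` with `a = (c - x)/(c - y)` is feasible at
level `x`, and `a κ ≤ κ'` gives `dη/dκ' ≤ a⁻¹ dη/dκ`, hence
`KL(η, κ') ≤ KL(η, κ) + log (1/a)`. So `F = KLinf(η, ·)` is monotone with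
`F x ≤ F y + log (c - y) - log (c - x)`; therefore `F` is either `⊤` on all of `(-∞, c)`
or finite there with `|F x - F y| ≤ |log (c - x) - log (c - y)|`. -/

/-- The class of probability measures on `ℝ` with `(1+ε)`-th absolute moment bounded by `B`. -/
def LBm (ε B : ℝ) : Set (Measure ℝ) :=
  {κ | IsProbabilityMeasure κ ∧ ∫⁻ y, ENNReal.ofReal (|y| ^ (1 + ε)) ∂κ ≤ ENNReal.ofReal B}

/-- The mean of a measure on `ℝ`. -/
noncomputable def mean (κ : Measure ℝ) : ℝ := ∫ y, y ∂κ

/-- Kullback-Leibler divergence `KL(η, κ) = ∫ log (dη/dκ) dη` if `η ≪ κ` (and the integral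
is defined), and `+∞` otherwise. -/
noncomputable def KL (η κ : Measure ℝ) : ℝ≥0∞ :=
  if η ≪ κ ∧ Integrable (fun y => Real.log ((η.rnDeriv κ y).toReal)) η
  then ENNReal.ofReal (∫ y, Real.log ((η.rnDeriv κ y).toReal) ∂η)
  else ⊤

/-- `KLinf(η, x) = inf { KL(η, κ) : κ ∈ 𝓛_B, m(κ) ≥ x }`. -/
noncomputable def KLinf (ε B : ℝ) (η : Measure ℝ) (x : ℝ) : ℝ≥0∞ :=
  ⨅ (κ : Measure ℝ) (_ : κ ∈ LBm ε B ∧ x ≤ mean κ), KL η κ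

open scoped NNReal

lemma continuousOn_of_dist_le_dist {α β γ : Type*} [TopologicalSpace α] [PseudoMetricSpace β]
    [PseudoMetricSpace γ] {s : Set α} {f : α → β} {g : α → γ} (hg : ContinuousOn g s)
    (h : ∀ x ∈ s, ∀ y ∈ s, dist (f x) (f y) ≤ dist (g x) (g y)) : ContinuousOn f s := by
  intro x hx
  rw [ContinuousWithinAt, tendsto_iff_dist_tendsto_zero]
  have hg0 : Filter.Tendsto (fun y => dist (g y) (g x)) (nhdsWithin x s) (nhds 0) := by
    simpa using (hg x hx).dist (tendsto_const_nhds (x := g x))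
  exact squeeze_zero' (Filter.Eventually.of_forall fun _ => dist_nonneg)
    (eventually_nhdsWithin_of_forall fun y hy => h y hy x hx) hg0

namespace MeasureTheory.Measure

variable {α : Type*} [MeasurableSpace α] {η ν : Measure α}

lemma lintegral_inv_rnDeriv_le [SigmaFinite η] [SigmaFinite ν] (hην : η ≪ ν) :
    ∫⁻ z, (η.rnDeriv ν z)⁻¹ ∂η ≤ ν Set.univ := by
  rw [← lintegral_rnDeriv_mul hην (f := fun z => (η.rnDeriv ν z)⁻¹)
    (measurable_rnDeriv η ν).inv.aemeasurable]
  calc ∫⁻ z, η.rnDeriv ν z * (η.rnDeriv ν z)⁻¹ ∂ν ≤ ∫⁻ _, 1 ∂ν :=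
        lintegral_mono fun z => ENNReal.mul_inv_le_one _
    _ = ν Set.univ := lintegral_one

lemma integrable_toReal_inv_rnDeriv [SigmaFinite η] [IsFiniteMeasure ν] (hην : η ≪ ν) :
    Integrable (fun z => ((η.rnDeriv ν z)⁻¹).toReal) η :=
  integrable_toReal_of_lintegral_ne_top (measurable_rnDeriv η ν).inv.aemeasurable
    ((lintegral_inv_rnDeriv_le hην).trans_lt (measure_lt_top ν _)).ne

lemma integrable_log_rnDeriv_of_ae_le [IsFiniteMeasure η] [IsFiniteMeasure ν] (hην : η ≪ ν)
    {g : α → ℝ} (hg : Integrable g η)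
    (hle : ∀ᵐ z ∂η, Real.log (η.rnDeriv ν z).toReal ≤ g z) :
    Integrable (fun z => Real.log (η.rnDeriv ν z).toReal) η := by
  -- from below, `log u ≥ 1 - u⁻¹`, and `(dη/dν)⁻¹` is `η`-integrable
  refine integrable_of_le_of_le
    (measurable_rnDeriv η ν).ennreal_toReal.log.aestronglyMeasurable ?_ hle
    ((integrable_const 1).sub (integrable_toReal_inv_rnDeriv hην)) hg
  filter_upwards [rnDeriv_pos hην, (rnDeriv_lt_top η ν).filter_mono hην.ae_le] with z h0 htop
  rw [Pi.sub_apply, ENNReal.toReal_inv]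
  exact Real.one_sub_inv_le_log_of_pos (ENNReal.toReal_pos h0.ne' htop.ne)

lemma ae_rnDeriv_le_inv_mul_of_smul_le {κ : Measure α} [SigmaFinite η] [SigmaFinite ν]
    [SigmaFinite κ] (hην : η ≪ ν) {a : ℝ≥0} (h : a • ν ≤ κ) :
    ∀ᵐ z ∂κ, η.rnDeriv κ z ≤ (a : ℝ≥0∞)⁻¹ * η.rnDeriv ν z := by
  filter_upwards [rnDeriv_mul_rnDeriv hην (κ := κ), rnDeriv_smul_left' ν κ a,
    rnDeriv_le_one_of_le h] with z hchain hsmul hle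
  rw [← hchain, Pi.mul_apply, mul_comm]
  refine mul_le_mul_left (ENNReal.le_inv_iff_mul_le.2 ?_) _
  rw [hsmul] at hle
  simpa [ENNReal.smul_def, mul_comm] using hle

end MeasureTheory.Measure

lemma KL_le_add_of_smul_le {η κ κ' : Measure ℝ} [IsProbabilityMeasure η] [SigmaFinite κ]
    [IsFiniteMeasure κ'] {a : ℝ≥0} (ha : a ≠ 0) (h : a • κ ≤ κ') :
    KL η κ' ≤ KL η κ + ENNReal.ofReal (-Real.log a) := by
  by_cases hKL : η ≪ κ ∧ Integrable (fun z => Real.log (η.rnDeriv κ z).toReal) η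
  swap
  · simp [KL, hKL]
  obtain ⟨hac, hint⟩ := hKL
  have hac' : η ≪ κ' := hac.trans <|
    (Measure.absolutelyContinuous_smul (by simpa using ha)).trans
      (Measure.absolutelyContinuous_of_le h)
  have hlog : ∀ᵐ z ∂η, Real.log (η.rnDeriv κ' z).toReal ≤
      -Real.log a + Real.log (η.rnDeriv κ z).toReal := by
    filter_upwards [hac'.ae_le (Measure.ae_rnDeriv_le_inv_mul_of_smul_le hac h),
      Measure.rnDeriv_pos hac', Measure.rnDeriv_pos hac,
      (Measure.rnDeriv_lt_top η κ).filter_mono hac.ae_le] with z hle hpos' hpos hfin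
    have hbound : (a : ℝ≥0∞)⁻¹ * η.rnDeriv κ z ≠ ⊤ := by finiteness
    calc Real.log (η.rnDeriv κ' z).toReal
        ≤ Real.log ((a : ℝ)⁻¹ * (η.rnDeriv κ z).toReal) := by
          refine Real.log_le_log (ENNReal.toReal_pos hpos'.ne' (ne_top_of_le_ne_top hbound hle)) ?_
          simpa using ENNReal.toReal_mono hbound hle
      _ = -Real.log a + Real.log (η.rnDeriv κ z).toReal := by
          rw [Real.log_mul (by positivity) (ENNReal.toReal_pos hpos.ne' hfin.ne).ne', Real.log_inv]
  have hint' := Measure.integrable_log_rnDeriv_of_ae_le hac' ((integrable_const _).add hint) hlog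
  rw [KL, if_pos ⟨hac', hint'⟩, KL, if_pos ⟨hac, hint⟩]
  calc ENNReal.ofReal (∫ z, Real.log (η.rnDeriv κ' z).toReal ∂η)
      ≤ ENNReal.ofReal (∫ z, (-Real.log a + Real.log (η.rnDeriv κ z).toReal) ∂η) :=
        ENNReal.ofReal_le_ofReal (integral_mono_ae hint' ((integrable_const _).add hint) hlog)
    _ = ENNReal.ofReal (-Real.log a + ∫ z, Real.log (η.rnDeriv κ z).toReal ∂η) := by
        rw [integral_add (integrable_const _) hint, integral_const, probReal_univ, one_smul]
    _ ≤ _ := ENNReal.ofReal_add_le.trans_eq (add_comm _ _)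

section MomentClass

variable {ε B : ℝ} {κ : Measure ℝ}

lemma integrable_id_of_mem_LBm (hε : 0 ≤ ε) (hκ : κ ∈ LBm ε B) :
    Integrable (fun y : ℝ => y) κ := by
  obtain ⟨_, hmom⟩ := hκ
  have hmom_int : Integrable (fun y : ℝ => |y| ^ (1 + ε)) κ :=
    ⟨(continuous_abs.rpow_const fun _ => Or.inr (by linarith)).aestronglyMeasurable,
      (hasFiniteIntegral_iff_ofReal (ae_of_all _ fun _ => by positivity)).2
        (hmom.trans_lt ENNReal.ofReal_lt_top)⟩
  refine ((integrable_const 1).add hmom_int).mono' aestronglyMeasurable_id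
    (ae_of_all _ fun y => ?_)
  rw [Real.norm_eq_abs, Pi.add_apply]
  rcases le_total |y| 1 with h | h
  · linarith [show 0 ≤ |y| ^ (1 + ε) by positivity]
  · linarith [Real.self_le_rpow_of_one_le h (by linarith : (1 : ℝ) ≤ 1 + ε)]

variable {a : ℝ≥0}

lemma smul_add_smul_dirac_mem_LBm (hκ : κ ∈ LBm ε B) (ha : a ≤ 1) {c : ℝ}
    (hc : |c| ^ (1 + ε) ≤ B) : a • κ + (1 - a) • Measure.dirac c ∈ LBm ε B := by
  obtain ⟨_, hmom⟩ := hκ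
  refine ⟨⟨?_⟩, ?_⟩
  · simp only [Measure.add_apply, Measure.smul_apply, measure_univ]
    rw [← add_smul, add_tsub_cancel_of_le ha, one_smul]
  · rw [lintegral_add_measure, lintegral_smul_measure, lintegral_smul_measure,
      lintegral_dirac]
    calc a • ∫⁻ y, ENNReal.ofReal (|y| ^ (1 + ε)) ∂κ
          + (1 - a) • ENNReal.ofReal (|c| ^ (1 + ε))
        ≤ a • ENNReal.ofReal B + (1 - a) • ENNReal.ofReal B := by gcongr
      _ = ENNReal.ofReal B := by rw [← add_smul, add_tsub_cancel_of_le ha, one_smul]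

lemma mean_smul_add_smul_dirac (hκ : Integrable (fun y : ℝ => y) κ) (ha : a ≤ 1) (c : ℝ) :
    mean (a • κ + (1 - a) • Measure.dirac c) = a * mean κ + (1 - a) * c := by
  rw [mean, integral_add_measure hκ.smul_measure_nnreal
    (integrable_dirac (by simp)).smul_measure_nnreal, integral_smul_nnreal_measure,
    integral_smul_nnreal_measure, integral_dirac, NNReal.smul_def, NNReal.smul_def,
    NNReal.coe_sub ha, mean, NNReal.coe_one, smul_eq_mul, smul_eq_mul]

end MomentClass

lemma KLinf_mono (ε B : ℝ) (η : Measure ℝ) : Monotone (KLinf ε B η) :=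
  fun _ _ h => le_iInf₂ fun κ hκ => iInf₂_le κ ⟨hκ.1, h.trans hκ.2⟩

lemma KLinf_le_add_log {ε B : ℝ} (hε : 0 ≤ ε) (η : Measure ℝ) [IsProbabilityMeasure η]
    {c x y : ℝ} (hc : |c| ^ (1 + ε) ≤ B) (hyx : y ≤ x) (hx : x < c) :
    KLinf ε B η x ≤ KLinf ε B η y + ENNReal.ofReal (Real.log (c - y) - Real.log (c - x)) := by
  have hcx : 0 < c - x := sub_pos.2 hx
  have hcy : 0 < c - y := by linarith
  set a : ℝ≥0 := ((c - x) / (c - y)).toNNReal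
  have ha : (a : ℝ) = (c - x) / (c - y) := Real.coe_toNNReal _ (by positivity)
  have ha0 : a ≠ 0 := by rw [← NNReal.coe_ne_zero, ha]; positivity
  have ha1 : a ≤ 1 := by
    rw [← NNReal.coe_le_coe, ha, NNReal.coe_one]
    exact div_le_one_of_le₀ (by linarith) hcy.le
  have hlog : -Real.log a = Real.log (c - y) - Real.log (c - x) := by
    rw [ha, Real.log_div hcx.ne' hcy.ne']
    ring
  rw [KLinf, KLinf, ENNReal.iInf₂_add]
  refine le_iInf₂ fun κ ⟨hκ, hmean⟩ => ?_
  have := hκ.1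
  refine (iInf₂_le (a • κ + (1 - a) • Measure.dirac c)
    ⟨smul_add_smul_dirac_mem_LBm hκ ha1 hc, ?_⟩).trans ?_
  · rw [← hlog]
    exact KL_le_add_of_smul_le ha0 (Measure.le_add_right le_rfl)
  · rw [mean_smul_add_smul_dirac (integrable_id_of_mem_LBm hε hκ) ha1]
    calc x = a * y + (1 - a) * c := by rw [ha]; field_simp; ring
      _ ≤ a * mean κ + (1 - a) * c := by gcongr

lemma continuousOn_of_monotoneOn_of_le_add {s : Set ℝ} {F : ℝ → ℝ≥0∞} {ψ : ℝ → ℝ}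
    (hψ : ContinuousOn ψ s) (hF : MonotoneOn F s)
    (hle : ∀ y ∈ s, ∀ x ∈ s, y ≤ x → F x ≤ F y + ENNReal.ofReal (ψ y - ψ x)) :
    ContinuousOn F s := by
  by_cases htop : ∃ x₀ ∈ s, F x₀ = ⊤
  · obtain ⟨x₀, hx₀, hFx₀⟩ := htop
    refine (continuousOn_const (c := ⊤)).congr fun x hx => ?_
    rcases le_total x x₀ with h | h
    · simpa [hFx₀] using hle x hx x₀ hx₀ h
    · exact top_le_iff.1 (hFx₀ ▸ hF hx₀ hx h)
  push Not at htop
  have hdist : ∀ y ∈ s, ∀ x ∈ s, y ≤ x →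
      dist (F x).toReal (F y).toReal ≤ dist (ψ x) (ψ y) := by
    intro y hy x hx hyx
    have hmono := ENNReal.toReal_mono (htop x hx) (hF hy hx hyx)
    have hadd := ENNReal.toReal_mono (by finiteness [htop y hy]) (hle y hy x hx hyx)
    rw [ENNReal.toReal_add (htop y hy) ENNReal.ofReal_ne_top, ENNReal.toReal_ofReal'] at hadd
    have hmax : max (ψ y - ψ x) 0 ≤ |ψ x - ψ y| :=
      max_le (abs_sub_comm (ψ x) (ψ y) ▸ le_abs_self _) (abs_nonneg _)
    rw [Real.dist_eq, Real.dist_eq, abs_of_nonneg (by linarith)]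
    linarith
  have hreal : ContinuousOn (fun x => (F x).toReal) s :=
    continuousOn_of_dist_le_dist hψ fun x hx y hy => (le_total y x).elim (hdist y hy x hx)
      fun h => by rw [dist_comm, dist_comm (ψ x)]; exact hdist x hx y hy h
  exact (ENNReal.continuous_ofReal.comp_continuousOn hreal).congr
    fun x hx => (ENNReal.ofReal_toReal (htop x hx)).symm

/-- For fixed `ε > 0`, `B > 0` and probability measure `η`, the map `x ↦ KLinf(η, x)` is
continuous on the open interval `(−B^{1/(1+ε)}, B^{1/(1+ε)})`. -/
theorem klinf_continuousOn_x (ε B : ℝ) (hε : 0 < ε) (hB : 0 < B)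
    (η : Measure ℝ) (hη : IsProbabilityMeasure η) :
    ContinuousOn (fun x => KLinf ε B η x)
      (Set.Ioo (-(B ^ (1 / (1 + ε)))) (B ^ (1 / (1 + ε)))) := by
  set c := B ^ (1 / (1 + ε))
  have hc : |c| ^ (1 + ε) = B := by
    rw [abs_of_pos (by positivity), ← Real.rpow_mul hB.le, one_div,
      inv_mul_cancel₀ (by linarith), Real.rpow_one]
  refine (continuousOn_of_monotoneOn_of_le_add (s := Set.Iio c) (ψ := fun x => Real.log (c - x))
    ?_ ((KLinf_mono ε B η).monotoneOn _) ?_).mono Set.Ioo_subset_Iio_self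
  · exact (continuousOn_const.sub continuousOn_id).log fun x hx => (sub_pos.2 hx).ne'
  · exact fun y _ x hx hyx => KLinf_le_add_log hε.le η hc.le hyx hx
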